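/- arXiv:2510.13268 — 2 statements merged into one kernel-verified Lean document; each statement's English description precedes it below -/
import Mathlib

section
/- In any feasible SACRP solution, for any cycle c with batch Y (the set of targets retrieved in that cycle), the set of heights {h_c(b) : b ∈ Y} (heights measured at the beginning of cycle c) forms a consecutive interval of integers; that is, listing the distinct heights in increasing order as h_1 < h_2 < … < h_k, one has h_{i+1} = h_i + 1 for all i. In other words, every batch of a feasible solution is height-continuous. -/
/-! # A model of the Side-Access Compact Retrieval Problem (SACRP)

A slice consists of stacks `0, 1, …, m-1`, stack `0` being on the
entry/exit side.  Stack `t` currently consists of unit loads at heights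
`0, 1, …, h t - 1` (heights are 0-indexed from the bottom).  Targets are
recorded by their current (stack, height) positions. -/

/-- An instance of the SACRP: `m` stacks with initial heights `height`,
and a pick-list `targets` of (stack, height) positions. -/
structure SACRP where
  m : ℕ
  height : ℕ → ℕ
  targets : Finset (ℕ × ℕ)

namespace SACRP

/-- Well-formedness: every target lies in an existing stack, at a height
below the top of its stack. -/
def WellFormed (I : SACRP) : Prop :=
  ∀ b ∈ I.targets, b.1 < I.m ∧ b.2 < I.height b.1

/-- `I.R b` : the number of targets initially positioned below `b` within
the same stack. -/
def R (I : SACRP) (b : ℕ × ℕ) : ℕ :=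
  (I.targets.filter fun b' => b'.1 = b.1 ∧ b'.2 < b.2).card

/-- A configuration during the retrieval process: current stack heights and
the current positions of the remaining (not yet retrieved) targets. -/
structure Config where
  height : ℕ → ℕ
  rem : Finset (ℕ × ℕ)

/-- The initial configuration of an instance. -/
def init (I : SACRP) : Config :=
  ⟨I.height, I.targets⟩

/-- A retrieval cycle: clearance levels `clear t` for every stack `t` (all
unit loads of stack `t` at heights `≥ clear t` are lifted for the whole
cycle), together with the sequence `seq` of retrieved targets, recorded by
their positions at the beginning of the cycle. -/
structure Cycle where
  clear : ℕ → ℕ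
  seq : List (ℕ × ℕ)

/-- Residual height of stack `t` after the retrievals in `pre` have been
performed in a cycle with clearance levels `clear`. -/
def dres (clear : ℕ → ℕ) (pre : List (ℕ × ℕ)) (t : ℕ) : ℕ :=
  clear t - (pre.filter fun b => b.1 = t).length

/-- Accessibility of the target at position `b` given residual heights `d`:
there is no unit load directly above it, and all stacks to its left have
residual height equal to its height. -/
def Accessible (d : ℕ → ℕ) (b : ℕ × ℕ) : Prop :=
  d b.1 = b.2 + 1 ∧ ∀ s < b.1, d s = b.2

/-- Validity of a cycle in a configuration: clearance levels are within
range, no target is retrieved twice, and every retrieved target is a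
remaining target that is accessible at its retrieval step. -/
def ValidCycle (cfg : Config) (c : Cycle) : Prop :=
  (∀ t, c.clear t ≤ cfg.height t) ∧ c.seq.Nodup ∧
    ∀ i : Fin c.seq.length,
      c.seq.get i ∈ cfg.rem ∧
        Accessible (dres c.clear (c.seq.take i)) (c.seq.get i)

/-- New position of a unit load after the unit loads at the positions in
`S` have been removed and the stacks have compacted downwards. -/
def fall (S : Finset (ℕ × ℕ)) (b : ℕ × ℕ) : ℕ × ℕ :=
  (b.1, b.2 - (S.filter fun a => a.1 = b.1 ∧ a.2 < b.2).card)

/-- The configuration obtained from `cfg` by removing a batch `S` of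
positions and compacting all stacks downwards. -/
def removeBatch (cfg : Config) (S : Finset (ℕ × ℕ)) : Config :=
  ⟨fun t => cfg.height t - (S.filter fun a => a.1 = t).card,
    (cfg.rem \ S).image (fall S)⟩

/-- The configuration at the end of a cycle: the retrieved targets are
removed, the lifted unit loads are lowered again and the stacks compact
downwards. -/
def Config.afterCycle (cfg : Config) (c : Cycle) : Config :=
  removeBatch cfg c.seq.toFinset

/-- Running a list of cycles from a configuration. -/
def runCycles (cfg : Config) : List Cycle → Config
  | [] => cfg
  | c :: cs => runCycles (cfg.afterCycle c) cs

/-- All cycles of a solution are valid, starting from configuration `cfg`. -/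
def ValidFrom (cfg : Config) : List Cycle → Prop
  | [] => True
  | c :: cs => ValidCycle cfg c ∧ ValidFrom (cfg.afterCycle c) cs

/-- A feasible solution of an instance: every cycle is valid and at the end
every target of the pick-list has been retrieved (exactly once, since
retrieved targets are removed from the configuration). -/
def Feasible (I : SACRP) (sol : List Cycle) : Prop :=
  ValidFrom I.init sol ∧ (runCycles I.init sol).rem = ∅

/-- A completion of a configuration: a valid sequence of cycles retrieving
all remaining targets. -/
def Completion (cfg : Config) (sol : List Cycle) : Prop :=
  ValidFrom cfg sol ∧ (runCycles cfg sol).rem = ∅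

/-- Energy expenditure of one cycle: the number of lifted unit loads. -/
def cycleEnergy (m : ℕ) (cfg : Config) (c : Cycle) : ℕ :=
  ∑ t ∈ Finset.range m, (cfg.height t - c.clear t)

/-- Total energy expenditure of a sequence of cycles started from `cfg`. -/
def energyFrom (m : ℕ) (cfg : Config) : List Cycle → ℕ
  | [] => 0
  | c :: cs => cycleEnergy m cfg c + energyFrom m (cfg.afterCycle c) cs

/-- Total energy expenditure of a solution. -/
def energy (I : SACRP) (sol : List Cycle) : ℕ :=
  energyFrom I.m I.init sol

/-! ## Geometry of batches -/

/-- The set of heights occurring in a batch. -/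
def bheights (Y : Finset (ℕ × ℕ)) : Finset ℕ :=
  Y.image Prod.snd

/-- The rightmost stack containing an element of the batch `Y` at height `x`. -/
def smax (Y : Finset (ℕ × ℕ)) (x : ℕ) : ℕ :=
  (Y.filter fun b => b.2 = x).sup Prod.fst

/-- Height-continuity: the distinct heights of the batch, listed in
increasing order, form a consecutive interval of integers. -/
def HeightContinuous (Y : Finset (ℕ × ℕ)) : Prop :=
  ((bheights Y).sort (· ≤ ·)).Chain' fun a b => b = a + 1

/-- `p` is a unimodal peak of the batch `Y`: the rightmost stacks `smax`
are non-decreasing on heights up to `p` and non-increasing from `p` on. -/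
def IsPeak (Y : Finset (ℕ × ℕ)) (p : ℕ) : Prop :=
  (∀ x ∈ bheights Y, ∀ y ∈ bheights Y, x ≤ y → y ≤ p → smax Y x ≤ smax Y y) ∧
  (∀ x ∈ bheights Y, ∀ y ∈ bheights Y, p ≤ x → x ≤ y → smax Y y ≤ smax Y x)

/-- Stack-unimodularity of a batch. -/
def StackUnimodular (Y : Finset (ℕ × ℕ)) : Prop :=
  ∃ p ∈ bheights Y, IsPeak Y p

/-- `x` and `y` are adjacent heights of the batch `Y` (`y` is the successor
height of `x` among the heights of `Y`). -/
def AdjHeights (Y : Finset (ℕ × ℕ)) (x y : ℕ) : Prop :=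
  x ∈ bheights Y ∧ y ∈ bheights Y ∧ x < y ∧ ∀ z ∈ bheights Y, ¬(x < z ∧ z < y)

/-- The unit load at position `b` belongs to `Y` or is absent (given the
current stack heights `H`). -/
def InOrAbsent (H : ℕ → ℕ) (Y : Finset (ℕ × ℕ)) (b : ℕ × ℕ) : Prop :=
  b ∈ Y ∨ H b.1 ≤ b.2

/-- Prefix-closedness of the batch `Y` with respect to the peak `p`: below
the peak, every unit load at the successor height in stacks up to `smax`
belongs to `Y` or is absent; symmetrically above the peak. -/
def PrefixCond (H : ℕ → ℕ) (Y : Finset (ℕ × ℕ)) (p : ℕ) : Prop :=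
  ∀ x y, AdjHeights Y x y →
    (x < p → ∀ t ≤ smax Y x, InOrAbsent H Y (t, y)) ∧
    (p < y → ∀ t ≤ smax Y y, InOrAbsent H Y (t, x))

/-- A weakly triangular batch: height-continuous, stack-unimodular and
prefix-closed (with respect to a common peak). -/
def WeaklyTriangular (H : ℕ → ℕ) (Y : Finset (ℕ × ℕ)) : Prop :=
  HeightContinuous Y ∧ ∃ p ∈ bheights Y, IsPeak Y p ∧ PrefixCond H Y p


/-! ### Auxiliary lemmas -/

/-- number of retrievals among the first `i` steps that happen in stack `t` -/
def cnt (L : List (ℕ × ℕ)) (i t : ℕ) : ℕ :=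
  ((L.take i).filter fun b => b.1 = t).length

lemma dres_eq_cnt (clear : ℕ → ℕ) (L : List (ℕ × ℕ)) (i t : ℕ) :
    dres clear (L.take i) t = clear t - cnt L i t := rfl

lemma cnt_zero (L : List (ℕ × ℕ)) (t : ℕ) : cnt L 0 t = 0 := rfl

lemma cnt_succ (L : List (ℕ × ℕ)) (i t : ℕ) (h : i < L.length) :
    cnt L (i + 1) t = cnt L i t + if (L.get ⟨i, h⟩).1 = t then 1 else 0 := by
  unfold cnt
  rw [List.take_succ, List.filter_append, List.length_append]
  congr 1
  have : L[i]? = some (L.get ⟨i, h⟩) := by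
    simp [List.getElem?_eq_getElem h]
  rw [this]
  simp only [Option.toList_some, List.filter_cons, List.filter_nil]
  split <;> simp_all

lemma cnt_succ_of_ge (L : List (ℕ × ℕ)) (i t : ℕ) (h : L.length ≤ i) :
    cnt L (i + 1) t = cnt L i t := by
  unfold cnt
  rw [List.take_of_length_le h, List.take_of_length_le (le_trans h (Nat.le_succ i))]

lemma cnt_le_succ (L : List (ℕ × ℕ)) (i t : ℕ) : cnt L i t ≤ cnt L (i + 1) t := by
  by_cases h : i < L.length
  · rw [cnt_succ L i t h]; omega
  · rw [cnt_succ_of_ge L i t (by omega)]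

lemma cnt_mono (L : List (ℕ × ℕ)) (t : ℕ) {i j : ℕ} (hij : i ≤ j) :
    cnt L i t ≤ cnt L j t := by
  induction j, hij using Nat.le_induction with
  | base => exact le_refl _
  | succ j hj ih => exact le_trans ih (cnt_le_succ L j t)

section Acc

variable {clear : ℕ → ℕ} {L : List (ℕ × ℕ)}
variable (hacc : ∀ i : Fin L.length, Accessible (dres clear (L.take i)) (L.get i))

include hacc

lemma acc_self (i : Fin L.length) :
    (L.get i).2 + 1 + cnt L i (L.get i).1 = clear (L.get i).1 := by
  have h := (hacc i).1
  rw [dres_eq_cnt] at h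
  omega

lemma acc_left (i : Fin L.length) {s : ℕ} (hs : s < (L.get i).1) :
    clear s - cnt L i s = (L.get i).2 := by
  have h := (hacc i).2 s hs
  rwa [dres_eq_cnt] at h

lemma cnt_le_clear (i t : ℕ) : cnt L i t ≤ clear t := by
  induction i with
  | zero => simp [cnt_zero]
  | succ i ih =>
    by_cases h : i < L.length
    · rw [cnt_succ L i t h]
      by_cases ht : (L.get ⟨i, h⟩).1 = t
      · have h2 := acc_self hacc ⟨i, h⟩
        simp only [Fin.val_mk] at h2
        rw [ht] at h2
        simp only [ht, if_true]
        omega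
      · simp only [ht, if_false]; omega
    · rw [cnt_succ_of_ge L i t (by omega)]; exact ih

/-- For each `r` below the count at time `j` in stack `t`, there is an earlier
step retrieving in stack `t` with count exactly `r`. -/
lemma exists_step {t r : ℕ} : ∀ {j : ℕ}, r < cnt L j t →
    ∃ i : Fin L.length, (L.get i).1 = t ∧ cnt L i t = r := by
  intro j
  induction j with
  | zero => simp [cnt_zero]
  | succ j ih =>
    intro hr
    by_cases h : r < cnt L j t
    · exact ih h
    · by_cases hj : j < L.length
      · rw [cnt_succ L j t hj] at hr
        by_cases ht : (L.get ⟨j, hj⟩).1 = t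
        · simp only [ht, if_true] at hr
          exact ⟨⟨j, hj⟩, ht, by simp only [Fin.val_mk]; omega⟩
        · simp only [ht, if_false] at hr; omega
      · rw [cnt_succ_of_ge L j t (by omega)] at hr; omega

/-- Every count index `r < cnt L L.length t` is witnessed by a retrieval at
height `clear t - 1 - r`; phrased additively. -/
lemma exists_height {t r : ℕ} (hr : r < cnt L L.length t) :
    ∃ i : Fin L.length, (L.get i).2 + 1 + r = clear t := by
  obtain ⟨i, hit, hic⟩ := exists_step hacc hr
  have := acc_self hacc i
  rw [hit, hic] at this
  exact ⟨i, this⟩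

/-- Dichotomy: the height of a retrieved target, seen from any stack `u` weakly
to its left, is either of the form `clear u - 1 - r` with `r < cnt L L.length u`
or equal to `clear u`. -/
lemma claimA (i : Fin L.length) {u : ℕ} (hu : u ≤ (L.get i).1) :
    (∃ r < cnt L L.length u, (L.get i).2 + 1 + r = clear u) ∨ (L.get i).2 = clear u := by
  rcases lt_or_eq_of_le hu with hlt | heq
  · have h := acc_left hacc i hlt
    have hle : cnt L i u ≤ clear u := cnt_le_clear hacc i u
    by_cases h0 : cnt L i u = 0
    · right; omega
    · left
      refine ⟨cnt L i u - 1, ?_, by omega⟩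
      have : cnt L i u ≤ cnt L L.length u := cnt_mono L u i.2.le
      omega
  · left
    have h := acc_self hacc i
    rw [← heq] at h
    refine ⟨cnt L i u, ?_, h⟩
    have hi : (i : ℕ) + 1 ≤ L.length := i.2
    have hstep := cnt_succ L i u i.2
    simp only [Fin.eta] at hstep
    rw [if_pos heq.symm] at hstep
    have : cnt L (i + 1) u ≤ cnt L L.length u := cnt_mono L u hi
    omega

/-- The key closure property: if `x < y` are heights of retrieved targets then
`x + 1` is also the height of a retrieved target. -/
lemma closure {x y : ℕ} (ix : Fin L.length) (iy : Fin L.length)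
    (hx : (L.get ix).2 = x) (hy : (L.get iy).2 = y) (hxy : x < y) :
    ∃ i : Fin L.length, (L.get i).2 = x + 1 := by
  set u := min (L.get ix).1 (L.get iy).1 with hu
  have hAx := claimA hacc ix (u := u) (hu ▸ min_le_left _ _)
  have hAy := claimA hacc iy (u := u) (hu ▸ min_le_right _ _)
  rw [hx] at hAx
  rw [hy] at hAy
  have hyle : y ≤ clear u := by
    rcases hAy with ⟨r, _, hr⟩ | h <;> omega
  rcases hAx with ⟨r, hrk, hr⟩ | h
  · by_cases h0 : r = 0
    · -- x + 1 = clear u, and x < y ≤ clear u forces y = x + 1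
      exact ⟨iy, by omega⟩
    · obtain ⟨i, hi⟩ := exists_height hacc (t := u) (r := r - 1) (by omega)
      exact ⟨i, by omega⟩
  · omega

end Acc

/-- A finset of naturals closed under "successor between two elements" sorts
into a chain of consecutive integers. -/
lemma chain_of_closed (S : Finset ℕ)
    (h : ∀ x ∈ S, ∀ y ∈ S, x < y → x + 1 ∈ S) :
    ((S.sort (· ≤ ·)).Chain' fun a b => b = a + 1) := by
  rw [List.Chain', List.isChain_iff_getElem]
  intro i hi
  set l := S.sort (· ≤ ·) with hl
  have hs : l.SortedLT := Finset.sortedLT_sort S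
  have hmono : StrictMono l.get := hs
  have hilt : i < l.length := by omega
  have hislt : i + 1 < l.length := by omega
  set a := l.get ⟨i, hilt⟩ with ha
  set b := l.get ⟨i + 1, hislt⟩ with hb
  have hab : a < b := hmono (by simp)
  have haS : a ∈ S := by rw [← Finset.mem_sort (· ≤ ·)]; exact List.get_mem l ⟨i, hilt⟩
  have hbS : b ∈ S := by rw [← Finset.mem_sort (· ≤ ·)]; exact List.get_mem l ⟨i+1, hislt⟩
  have hsucc : a + 1 ∈ S := h a haS b hbS hab
  rw [← Finset.mem_sort (· ≤ ·), ← hl, List.mem_iff_get] at hsucc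
  obtain ⟨j, hj⟩ := hsucc
  have h1 : (⟨i, hilt⟩ : Fin l.length) < j := by
    rw [← hmono.lt_iff_lt]; rw [hj, ← ha]; omega
  have h2 : j ≤ (⟨i + 1, hislt⟩ : Fin l.length) := by
    rw [← hmono.le_iff_le]; rw [hj, ← hb]; omega
  have hj2 : j = (⟨i + 1, hislt⟩ : Fin l.length) := by
    simp only [Fin.lt_def, Fin.le_def, Fin.val_mk] at h1 h2
    exact Fin.ext (by simp only [Fin.val_mk]; omega)
  rw [hj2] at hj
  show b = a + 1
  rw [← hj, ← hb]

/-- Extracting the validity of an individual cycle from `ValidFrom`. -/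
lemma validFrom_get : ∀ (sol : List Cycle) (cfg : Config), ValidFrom cfg sol →
    ∀ c : Fin sol.length, ValidCycle (runCycles cfg (sol.take c)) (sol.get c) := by
  intro sol
  induction sol with
  | nil => intro cfg _ c; exact absurd c.2 (by simp)
  | cons cy cs ih =>
    intro cfg hv c
    rcases hv with ⟨h1, h2⟩
    refine Fin.cases ?_ ?_ c
    · simpa [runCycles] using h1
    · intro j
      have := ih (cfg.afterCycle cy) h2 j
      simpa [runCycles, List.take_succ_cons] using this

/-- In any feasible SACRP solution, for any cycle `c` with
batch `Y` (the set of targets retrieved in that cycle, recorded by their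
positions — in particular their heights — at the beginning of cycle `c`),
the distinct heights of `Y`, listed in increasing order as
`h₁ < h₂ < … < h_k`, satisfy `h_{i+1} = h_i + 1` for all `i`; that is,
every batch of a feasible solution is height-continuous. -/
theorem batch_height_continuous (I : SACRP) (hwf : I.WellFormed)
    (sol : List Cycle) (hsol : I.Feasible sol) (c : Fin sol.length) :
    HeightContinuous (sol.get c).seq.toFinset := by
  have hvc := validFrom_get sol I.init hsol.1 c
  set L := (sol.get c).seq with hL
  have hacc : ∀ i : Fin L.length,
      Accessible (dres (sol.get c).clear (L.take i)) (L.get i) :=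
    fun i => (hvc.2.2 i).2
  unfold HeightContinuous
  apply chain_of_closed
  intro x hx y hy hxy
  have hmem : ∀ z, z ∈ bheights L.toFinset ↔ ∃ i : Fin L.length, (L.get i).2 = z := by
    intro z
    simp only [bheights, Finset.mem_image, List.mem_toFinset, List.mem_iff_get]
    constructor
    · rintro ⟨b, ⟨i, rfl⟩, rfl⟩; exact ⟨i, rfl⟩
    · rintro ⟨i, rfl⟩; exact ⟨L.get i, ⟨i, rfl⟩, rfl⟩
  rw [hmem] at hx hy ⊢
  obtain ⟨ix, hix⟩ := hx
  obtain ⟨iy, hiy⟩ := hy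
  exact closure hacc ix iy hix hiy hxy

end SACRP
end

section
/- In the SACRP instance I_R constructed from a 3-Partition instance, every feasible solution uses at least 4m cycles to retrieve the targets in the sets X and Y of stack 1: since in stack 1 the targets appear as 4m pairwise disjoint vertical segments (the 3m substacks X_1,…,X_{3m} and the m singletons y_1,…,y_m), each separated from the next by at least one non-target, and since the batch of any single cycle is height-continuous, no single cycle can retrieve targets from two distinct segments of stack 1. Moreover, every feasible solution uses at least m cycles to retrieve the targets in Z: since stack 2 contains no targets, prefix-closure of batches implies at most one element of Z can be retrieved per cycle. -/
namespace SACRP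

/-! ## The reduction from 3-Partition

Given a 3-Partition instance with multiset `a : Fin (3*m) → ℕ` and target
sum `T`, we construct a SACRP instance with three stacks (stack `0` is the
first stack, on the entry side). -/

/-- The number of targets of the reduction: `n = m*T + 2*m`. -/
def nRed (m T : ℕ) : ℕ := m * T + 2 * m

/-- The large constant `L = 4*m*(m*(4*T+2) + 3*n)`. -/
def LRed (m T : ℕ) : ℕ := 4 * m * (m * (4 * T + 2) + 3 * nRed m T)

/-- The total number of unit loads `K = m*(4*T+2) + 3*n + L`. -/
def KRed (m T : ℕ) : ℕ := m * (4 * T + 2) + 3 * nRed m T + LRed m T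

/-- Starting height of the substack `X i` in the first stack: the substacks
`X 0, …, X (3m-1)` of sizes `a 0, …, a (3m-1)` are consecutive, starting at
the bottom of the stack, and every pair of consecutive substacks is
separated by a single non-target. -/
def startX {m : ℕ} (a : Fin (3 * m) → ℕ) (i : Fin (3 * m)) : ℕ :=
  ∑ j ∈ Finset.univ.filter fun j => j < i, (a j + 1)

/-- `S = ∑ i (a i + 1)`; the topmost element of `X` is at height `S - 2`. -/
def sumX {m : ℕ} (a : Fin (3 * m) → ℕ) : ℕ :=
  ∑ j, (a j + 1)

/-- The targets of the set `X` (in the first stack). -/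
def Xtargets {m : ℕ} (a : Fin (3 * m) → ℕ) : Finset (ℕ × ℕ) :=
  Finset.univ.biUnion fun i : Fin (3 * m) =>
    (Finset.range (a i)).image fun j => (0, startX a i + j)

/-- The targets `y 1, …, y m` (in the first stack): `y 1` lies `T + 2`
heights above the topmost element of `X`, and successive elements are
separated by `T` non-targets. -/
def Ytargets (m T : ℕ) (a : Fin (3 * m) → ℕ) : Finset (ℕ × ℕ) :=
  (Finset.range m).image fun k => (0, sumX a + T + k * (T + 1))

/-- The targets `z 1, …, z m` (a consecutive substack of the third stack):
`z 1` lies two heights above the topmost element of `X` and `T` heights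
below the bottommost element of `Y`. -/
def Ztargets (m T : ℕ) (a : Fin (3 * m) → ℕ) : Finset (ℕ × ℕ) :=
  (Finset.range m).image fun k => (2, sumX a + k)

/-- The SACRP instance `I_R` constructed from a 3-Partition instance:
three stacks of heights `m*(2T+1) + n + L`, `m*T + n` and `m*(T+1) + n`,
with pick-list `X ∪ Y ∪ Z`. -/
def reduction (m T : ℕ) (a : Fin (3 * m) → ℕ) : SACRP where
  m := 3
  height := fun t =>
    if t = 0 then m * (2 * T + 1) + nRed m T + LRed m T
    else if t = 1 then m * T + nRed m T
    else if t = 2 then m * (T + 1) + nRed m T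
    else 0
  targets := Xtargets a ∪ Ytargets m T a ∪ Ztargets m T a

/-- The 3-Partition instance `(a, T)` admits a partition of the `3*m`
numbers into `m` triples, each summing to `T`. -/
def Partition3 (m T : ℕ) (a : Fin (3 * m) → ℕ) : Prop :=
  ∃ f : Fin (3 * m) → Fin m, ∀ g : Fin m,
    (Finset.univ.filter fun i => f i = g).card = 3 ∧
    ∑ i ∈ Finset.univ.filter (fun i => f i = g), a i = T

/-! ### Auxiliary development for the proof of Statement 14 -/

section Aux

/-- Number of elements of `D` strictly below `b` in the stack of `b`. -/
def bc (D : Finset (ℕ × ℕ)) (b : ℕ × ℕ) : ℕ :=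
  (D.filter fun a => a.1 = b.1 ∧ a.2 < b.2).card

lemma fall_fst (D : Finset (ℕ × ℕ)) (b : ℕ × ℕ) : (fall D b).1 = b.1 := rfl

lemma fall_snd (D : Finset (ℕ × ℕ)) (b : ℕ × ℕ) : (fall D b).2 = b.2 - bc D b := rfl

lemma bc_le (D : Finset (ℕ × ℕ)) (b : ℕ × ℕ) : bc D b ≤ b.2 := by
  have h : (D.filter fun a => a.1 = b.1 ∧ a.2 < b.2) ⊆
      (Finset.range b.2).image fun x => (b.1, x) := by
    rintro ⟨x1, x2⟩ hx
    simp only [Finset.mem_filter] at hx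
    simp only [Finset.mem_image, Finset.mem_range]
    exact ⟨x2, hx.2.2, by rw [hx.2.1]⟩
  calc bc D b ≤ ((Finset.range b.2).image fun x => (b.1, x)).card := Finset.card_le_card h
    _ ≤ (Finset.range b.2).card := Finset.card_image_le
    _ = b.2 := Finset.card_range _

lemma fall_snd_lt {D : Finset (ℕ × ℕ)} {b b' : ℕ × ℕ} (hb : b ∉ D) (hs : b'.1 = b.1)
    (h : b.2 < b'.2) : (fall D b).2 < (fall D b').2 := by
  have hkey : bc D b' ≤ bc D b + (b'.2 - b.2 - 1) := by
    have hsub : D.filter (fun a => a.1 = b'.1 ∧ a.2 < b'.2) ⊆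
        (D.filter fun a => a.1 = b.1 ∧ a.2 < b.2) ∪
          ((Finset.Ioo b.2 b'.2).image fun x => (b.1, x)) := by
      rintro ⟨x1, x2⟩ hx
      simp only [Finset.mem_filter] at hx
      simp only [Finset.mem_union, Finset.mem_filter, Finset.mem_image, Finset.mem_Ioo]
      rcases lt_or_ge x2 b.2 with hlt | hge
      · exact Or.inl ⟨hx.1, hx.2.1.trans hs, hlt⟩
      · refine Or.inr ⟨x2, ⟨?_, hx.2.2⟩, by rw [hx.2.1, hs]⟩
        rcases Nat.eq_or_lt_of_le hge with heq | hlt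
        · exfalso
          have hxb : (x1, x2) = b := by rw [hx.2.1.trans hs, ← heq]
          exact hb (hxb ▸ hx.1)
        · exact hlt
    calc bc D b' ≤ _ := Finset.card_le_card hsub
      _ ≤ bc D b + ((Finset.Ioo b.2 b'.2).image fun x => (b.1, x)).card :=
          Finset.card_union_le _ _
      _ ≤ bc D b + (b'.2 - b.2 - 1) := by
          have h1 : ((Finset.Ioo b.2 b'.2).image fun x => (b.1, x)).card ≤ b'.2 - b.2 - 1 := by
            calc _ ≤ (Finset.Ioo b.2 b'.2).card := Finset.card_image_le
              _ = b'.2 - b.2 - 1 := by rw [Nat.card_Ioo]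
          omega
  have h1 := bc_le D b
  simp only [fall_snd]
  omega

lemma fall_inj {D : Finset (ℕ × ℕ)} {b b' : ℕ × ℕ} (hb : b ∉ D) (hb' : b' ∉ D)
    (h : fall D b = fall D b') : b = b' := by
  have hs0 := congrArg Prod.fst h
  have hs : b.1 = b'.1 := hs0
  have h2 := congrArg Prod.snd h
  rcases lt_trichotomy b.2 b'.2 with hlt | heq | hgt
  · exact absurd h2 (Nat.ne_of_lt (fall_snd_lt hb hs.symm hlt))
  · rw [← Prod.mk.eta (p := b), ← Prod.mk.eta (p := b'), hs, heq]
  · exact absurd h2.symm (Nat.ne_of_lt (fall_snd_lt hb' hs hgt))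

lemma bc_image_fall {D E : Finset (ℕ × ℕ)} {b : ℕ × ℕ} (hDE : ∀ e ∈ E, e ∉ D)
    (hbD : b ∉ D) (hbE : b ∉ E) :
    bc (E.image (fall D)) (fall D b) = bc E b := by
  have himg : (E.image (fall D)).filter (fun x => x.1 = (fall D b).1 ∧ x.2 < (fall D b).2)
      = (E.filter fun e => e.1 = b.1 ∧ e.2 < b.2).image (fall D) := by
    ext x
    simp only [Finset.mem_filter, Finset.mem_image]
    constructor
    · rintro ⟨⟨e, he, rfl⟩, h1, h2⟩
      have h1' : e.1 = b.1 := h1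
      refine ⟨e, ⟨he, h1', ?_⟩, rfl⟩
      by_contra hge
      push_neg at hge
      rcases Nat.eq_or_lt_of_le hge with heq | hlt
      · have heb : e = b := by rw [← Prod.mk.eta (p := e), ← Prod.mk.eta (p := b), h1', heq]
        exact hbE (heb ▸ he)
      · exact absurd h2 (Nat.lt_asymm (fall_snd_lt hbD h1' hlt))
    · rintro ⟨e, ⟨he, h1, h2⟩, rfl⟩
      exact ⟨⟨e, he, rfl⟩, h1, fall_snd_lt (hDE e he) h1.symm h2⟩
  rw [bc, himg, Finset.card_image_of_injOn, bc]
  intro x hx y hy hxy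
  exact fall_inj (hDE x (Finset.mem_filter.mp hx).1) (hDE y (Finset.mem_filter.mp hy).1) hxy

lemma bc_union {D E : Finset (ℕ × ℕ)} (hDE : ∀ e ∈ E, e ∉ D) (b : ℕ × ℕ) :
    bc (D ∪ E) b = bc D b + bc E b := by
  rw [bc, Finset.filter_union, Finset.card_union_of_disjoint, bc, bc]
  exact Finset.disjoint_filter_filter
    (Finset.disjoint_left.mpr fun x hx hx' => (hDE x hx') hx)

lemma fall_comp {D E : Finset (ℕ × ℕ)} {b : ℕ × ℕ} (hDE : ∀ e ∈ E, e ∉ D)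
    (hbD : b ∉ D) (hbE : b ∉ E) :
    fall (E.image (fall D)) (fall D b) = fall (D ∪ E) b := by
  show ((fall D b).1, (fall D b).2 - bc (E.image (fall D)) (fall D b))
      = (b.1, b.2 - bc (D ∪ E) b)
  rw [bc_image_fall hDE hbD hbE, bc_union hDE, fall_fst, fall_snd, Nat.sub_sub]

lemma fall_empty (b : ℕ × ℕ) : fall ∅ b = b := by
  show (b.1, b.2 - bc ∅ b) = b
  rw [bc, Finset.filter_empty, Finset.card_empty, Nat.sub_zero]

end Aux

section Aux2

/-- Tracking invariant: the remaining targets are the images, under the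
compaction map `fall D`, of the original targets not yet removed. -/
def TrackedR (A D : Finset (ℕ × ℕ)) (cfg : Config) : Prop :=
  D ⊆ A ∧ cfg.rem = (A \ D).image (fall D)

/-- Original targets removed by cycle `c` (given removed-so-far set `D`). -/
def stepE (A D : Finset (ℕ × ℕ)) (c : Cycle) : Finset (ℕ × ℕ) :=
  (A \ D).filter fun b => fall D b ∈ c.seq

lemma mem_rem_of_mem_seq {cfg : Config} {c : Cycle} (hv : ValidCycle cfg c) :
    ∀ x ∈ c.seq, x ∈ cfg.rem := by
  intro x hx
  obtain ⟨i, rfl⟩ := List.mem_iff_get.mp hx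
  exact (hv.2.2 i).1

lemma seq_toFinset_eq {A D : Finset (ℕ × ℕ)} {cfg : Config} {c : Cycle}
    (ht : TrackedR A D cfg) (hv : ValidCycle cfg c) :
    c.seq.toFinset = (stepE A D c).image (fall D) := by
  ext x
  simp only [List.mem_toFinset, stepE, Finset.mem_image, Finset.mem_filter]
  constructor
  · intro hx
    have hrem := mem_rem_of_mem_seq hv x hx
    rw [ht.2] at hrem
    obtain ⟨e, he, rfl⟩ := Finset.mem_image.mp hrem
    exact ⟨e, ⟨he, hx⟩, rfl⟩
  · rintro ⟨e, ⟨he, hseq⟩, rfl⟩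
    exact hseq

lemma trackedR_step {A D : Finset (ℕ × ℕ)} {cfg : Config} {c : Cycle}
    (ht : TrackedR A D cfg) (hv : ValidCycle cfg c) :
    TrackedR A (D ∪ stepE A D c) (cfg.afterCycle c) := by
  have hE : stepE A D c ⊆ A \ D := Finset.filter_subset _ _
  have hDE : ∀ e ∈ stepE A D c, e ∉ D := fun e he => (Finset.mem_sdiff.mp (hE he)).2
  constructor
  · intro x hx
    rcases Finset.mem_union.mp hx with h | h
    · exact ht.1 h
    · exact (Finset.mem_sdiff.mp (hE h)).1
  · show (cfg.rem \ c.seq.toFinset).image (fall c.seq.toFinset) = _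
    rw [seq_toFinset_eq ht hv, ht.2]
    have h1 : (A \ D).image (fall D) \ (stepE A D c).image (fall D)
        = (A \ (D ∪ stepE A D c)).image (fall D) := by
      ext x
      simp only [Finset.mem_sdiff, Finset.mem_image]
      constructor
      · rintro ⟨⟨e, he, rfl⟩, hne⟩
        refine ⟨e, ⟨he.1, fun h => ?_⟩, rfl⟩
        rcases Finset.mem_union.mp h with h' | h'
        · exact he.2 h'
        · exact hne ⟨e, h', rfl⟩
      · rintro ⟨e, he, rfl⟩
        refine ⟨⟨e, ⟨he.1, fun h => he.2 (Finset.mem_union_left _ h)⟩, rfl⟩, ?_⟩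
        rintro ⟨e', he', heq⟩
        have he'2 := Finset.mem_sdiff.mp (hE he')
        have hee : e' = e := fall_inj he'2.2 (fun h => he.2 (Finset.mem_union_left _ h)) heq
        exact he.2 (Finset.mem_union_right _ (hee ▸ he'))
    rw [h1, Finset.image_image]
    apply Finset.image_congr
    intro e he
    simp only [Finset.mem_coe, Finset.mem_sdiff, Finset.mem_union] at he
    simp only [Function.comp_apply]
    exact fall_comp hDE (fun h => he.2 (Or.inl h)) (fun h => he.2 (Or.inr h))

/-- Removed-so-far set after a list of cycles. -/
def DAfter (A : Finset (ℕ × ℕ)) : Finset (ℕ × ℕ) → List Cycle → Finset (ℕ × ℕ)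
  | D, [] => D
  | D, c :: cs => DAfter A (D ∪ stepE A D c) cs

lemma trackedR_run {A : Finset (ℕ × ℕ)} : ∀ (sol : List Cycle) (cfg : Config)
    (D : Finset (ℕ × ℕ)), TrackedR A D cfg → ValidFrom cfg sol →
    TrackedR A (DAfter A D sol) (runCycles cfg sol)
  | [], _, _, ht, _ => ht
  | c :: cs, cfg, D, ht, hv =>
      trackedR_run cs _ _ (trackedR_step ht hv.1) hv.2

lemma mem_DAfter_index {A : Finset (ℕ × ℕ)} : ∀ (sol : List Cycle) (D : Finset (ℕ × ℕ))
    (b : ℕ × ℕ), b ∈ DAfter A D sol → b ∉ D →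
    ∃ i, ∃ hi : i < sol.length,
      b ∉ DAfter A D (sol.take i) ∧ b ∈ stepE A (DAfter A D (sol.take i)) (sol.get ⟨i, hi⟩)
  | [], _, b, hmem, hnot => absurd hmem hnot
  | c :: cs, D, b, hmem, hnot => by
      by_cases hb : b ∈ D ∪ stepE A D c
      · rcases Finset.mem_union.mp hb with h | h
        · exact absurd h hnot
        · exact ⟨0, Nat.succ_pos _, hnot, h⟩
      · obtain ⟨i, hi, h1, h2⟩ := mem_DAfter_index cs (D ∪ stepE A D c) b hmem hb
        exact ⟨i + 1, Nat.succ_lt_succ hi, h1, h2⟩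

lemma runCycles_append : ∀ (l1 l2 : List Cycle) (cfg : Config),
    runCycles cfg (l1 ++ l2) = runCycles (runCycles cfg l1) l2
  | [], _, _ => rfl
  | c :: cs, l2, cfg => runCycles_append cs l2 (cfg.afterCycle c)

lemma validFrom_append : ∀ (l1 l2 : List Cycle) (cfg : Config),
    ValidFrom cfg (l1 ++ l2) → ValidFrom cfg l1 ∧ ValidFrom (runCycles cfg l1) l2
  | [], _, _, h => ⟨trivial, h⟩
  | c :: cs, l2, cfg, h => by
      obtain ⟨h1, h2⟩ := h
      obtain ⟨h3, h4⟩ := validFrom_append cs l2 (cfg.afterCycle c) h2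
      exact ⟨⟨h1, h3⟩, h4⟩

lemma valid_at_index {cfg : Config} {sol : List Cycle} (hv : ValidFrom cfg sol)
    (i : ℕ) (hi : i < sol.length) :
    ValidCycle (runCycles cfg (sol.take i)) (sol.get ⟨i, hi⟩) := by
  have hv' : ValidFrom cfg (sol.take i ++ sol.drop i) := by
    rw [List.take_append_drop]; exact hv
  have h2 := (validFrom_append _ _ _ hv').2
  rw [List.drop_eq_getElem_cons hi] at h2
  have h3 := h2.1
  simpa [List.get_eq_getElem] using h3

end Aux2

section Aux3

lemma stack2_unique {cfg : Config} {c : Cycle} (hv : ValidCycle cfg c)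
    (hno1 : ∀ x ∈ cfg.rem, x.1 ≠ 1) {p q : ℕ × ℕ}
    (hp : p ∈ c.seq) (hq : q ∈ c.seq) (hp2 : p.1 = 2) (hq2 : q.1 = 2) : p = q := by
  have hfilter : ∀ n, ((c.seq.take n).filter fun x : ℕ × ℕ => x.1 = 1) = [] := by
    intro n
    rw [List.filter_eq_nil_iff]
    intro x hx
    have hx' : x ∈ c.seq := List.mem_of_mem_take hx
    simp only [decide_eq_true_eq]
    exact hno1 x (mem_rem_of_mem_seq hv x hx')
  have key : ∀ r ∈ c.seq, r.1 = 2 → r.2 = c.clear 1 := by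
    intro r hr hr2
    obtain ⟨i, rfl⟩ := List.mem_iff_get.mp hr
    have hacc := (hv.2.2 i).2
    have h1 := hacc.2 1 (by omega)
    have h1' : c.clear 1 - ((c.seq.take ↑i).filter fun x : ℕ × ℕ => x.1 = 1).length
        = (c.seq.get i).2 := h1
    rw [hfilter] at h1'
    simpa using h1'.symm
  have h1 := key p hp hp2
  have h2 := key q hq hq2
  rw [← Prod.mk.eta (p := p), ← Prod.mk.eta (p := q), hp2, hq2, h1, h2]

lemma stack0_contig {cfg : Config} {c : Cycle} (hv : ValidCycle cfg c)
    {p q : ℕ × ℕ} (hp : p ∈ c.seq) (hq : q ∈ c.seq)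
    (hp0 : p.1 = 0) (hq0 : q.1 = 0) {h : ℕ} (h1 : p.2 < h) (h2 : h < q.2) :
    (0, h) ∈ c.seq := by
  set f : ℕ → ℕ := fun n => ((c.seq.take n).filter fun x : ℕ × ℕ => x.1 = 0).length with hf
  have heq : ∀ r ∈ c.seq, r.1 = 0 → ∃ i : Fin c.seq.length, c.seq.get i = r ∧
      c.clear 0 - f ↑i = r.2 + 1 := by
    intro r hr hr0
    obtain ⟨i, rfl⟩ := List.mem_iff_get.mp hr
    refine ⟨i, rfl, ?_⟩
    have hacc := (hv.2.2 i).2.1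
    rw [hr0] at hacc
    exact hacc
  obtain ⟨i, hpi, hip⟩ := heq p hp hp0
  obtain ⟨j, hqj, hjq⟩ := heq q hq hq0
  have hstep : ∀ (k : ℕ) (hk : k < c.seq.length),
      f (k + 1) = f k + (if (c.seq.get ⟨k, hk⟩).1 = 0 then 1 else 0) := by
    intro k hk
    have ht : c.seq.take (k + 1) = c.seq.take k ++ [c.seq.get ⟨k, hk⟩] := by
      rw [List.take_succ, List.getElem?_eq_getElem hk]
      simp [List.get_eq_getElem]
    simp only [hf]
    rw [ht, List.filter_append, List.length_append]
    congr 1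
    by_cases h0 : (c.seq.get ⟨k, hk⟩).1 = 0 <;>
      simp only [List.get_eq_getElem] at h0 <;> simp [h0]
  have hconst : ∀ k, c.seq.length ≤ k → f k = f c.seq.length := by
    intro k hk
    simp only [hf]
    rw [List.take_of_length_le hk, List.take_of_length_le (le_refl _)]
  have ivt : ∀ n v, v < f n → ∃ (k : ℕ) (hk : k < c.seq.length),
      f k = v ∧ (c.seq.get ⟨k, hk⟩).1 = 0 ∧ f (k + 1) = v + 1 := by
    intro n
    induction n with
    | zero => intro v hv; exfalso; simp [hf] at hv
    | succ n ih =>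
      intro v hv
      by_cases hn : n < c.seq.length
      · rw [hstep n hn] at hv
        by_cases h0 : (c.seq.get ⟨n, hn⟩).1 = 0
        · rw [if_pos h0] at hv
          rcases Nat.lt_or_ge v (f n) with hlt | hge
          · exact ih v hlt
          · have hveq : v = f n := by omega
            exact ⟨n, hn, hveq.symm, h0, by rw [hstep n hn, if_pos h0]; omega⟩
        · rw [if_neg h0] at hv
          exact ih v (by omega)
      · have hcc : f (n + 1) = f n := by
          rw [hconst (n + 1) (by omega), hconst n (by omega)]
        rw [hcc] at hv
        exact ih v hv
  have hv0 : c.clear 0 - h - 1 < f ↑i := by omega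
  obtain ⟨k, hk, hfk, hk0, _⟩ := ivt ↑i _ hv0
  have hacc := (hv.2.2 ⟨k, hk⟩).2.1
  rw [hk0] at hacc
  have hacc' : c.clear 0 - f k = (c.seq.get ⟨k, hk⟩).2 + 1 := hacc
  have hkh : (c.seq.get ⟨k, hk⟩).2 = h := by omega
  have hgoal : c.seq.get ⟨k, hk⟩ = (0, h) := by
    rw [← Prod.mk.eta (p := c.seq.get ⟨k, hk⟩), hk0, hkh]
  rw [← hgoal]
  exact List.get_mem _ _

lemma countP_eq_card {α : Type*} (p : α → Bool) :
    ∀ l : List α, l.countP p = (Finset.univ.filter fun i : Fin l.length => p (l.get i)).card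
  | [] => by simp
  | x :: l => by
      rw [List.countP_cons, countP_eq_card p l, Finset.card_filter, Finset.card_filter]
      simp only [List.length_cons]
      rw [Fin.sum_univ_succ]
      simp only [List.get_cons_succ, List.get_cons_zero]
      by_cases hpx : p x <;> simp [hpx, Nat.add_comm]

lemma countP_ge_of_inj {α : Type*} (l : List α) (p : α → Bool) (s : Finset ℕ) (F : ℕ → ℕ)
    (hmem : ∀ k ∈ s, ∃ hk : F k < l.length, p (l.get ⟨F k, hk⟩) = true)
    (hinj : ∀ k ∈ s, ∀ k' ∈ s, F k = F k' → k = k') :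
    s.card ≤ l.countP p := by
  rcases s.eq_empty_or_nonempty with rfl | ⟨k0, hk0⟩
  · simp
  obtain ⟨hk0l, _⟩ := hmem k0 hk0
  rw [countP_eq_card]
  set Ftot : ℕ → Fin l.length := fun k => if h : F k < l.length then ⟨F k, h⟩ else ⟨F k0, hk0l⟩
    with hFtot
  apply Finset.card_le_card_of_injOn Ftot
  · intro k hk
    obtain ⟨hkl, hpk⟩ := hmem k hk
    simp only [hFtot, dif_pos hkl, Finset.mem_filter, Finset.mem_univ, true_and]
    exact Finset.mem_coe.mpr (Finset.mem_filter.mpr ⟨Finset.mem_univ _, hpk⟩)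
  · intro k hk k' hk' hFeq
    obtain ⟨hkl, _⟩ := hmem k (by simpa using hk)
    obtain ⟨hkl', _⟩ := hmem k' (by simpa using hk')
    simp only [hFtot, dif_pos hkl, dif_pos hkl', Fin.mk.injEq] at hFeq
    exact hinj k (by simpa using hk) k' (by simpa using hk') hFeq

end Aux3

section AuxRed

variable {m T : ℕ} (a : Fin (3 * m) → ℕ)

/-- `sIdx a i` : starting height of the `i`-th substack, as a function on `ℕ`. -/
def sIdx (i : ℕ) : ℕ :=
  ∑ j ∈ Finset.univ.filter fun j : Fin (3 * m) => (j : ℕ) < i, (a j + 1)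

lemma startX_eq (i : Fin (3 * m)) : startX a i = sIdx a i := by
  unfold startX sIdx
  apply Finset.sum_congr _ fun _ _ => rfl
  apply Finset.filter_congr
  intro j _
  first
  | exact Fin.lt_def
  | exact propext Fin.lt_def

lemma sIdx_succ (i : ℕ) (hi : i < 3 * m) : sIdx a (i + 1) = sIdx a i + (a ⟨i, hi⟩ + 1) := by
  have hins : (Finset.univ.filter fun j : Fin (3 * m) => (j : ℕ) < i + 1)
      = insert ⟨i, hi⟩ (Finset.univ.filter fun j : Fin (3 * m) => (j : ℕ) < i) := by
    ext j
    simp only [Finset.mem_filter, Finset.mem_insert, Finset.mem_univ, true_and, Fin.ext_iff]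
    omega
  unfold sIdx
  rw [hins, Finset.sum_insert (by simp)]
  omega

lemma sIdx_mono {i i' : ℕ} (h : i ≤ i') : sIdx a i ≤ sIdx a i' := by
  apply Finset.sum_le_sum_of_subset
  intro j hj
  simp only [Finset.mem_filter, Finset.mem_univ, true_and] at hj ⊢
  omega

lemma sIdx_total : sIdx a (3 * m) = sumX a := by
  unfold sIdx sumX
  rw [Finset.filter_true_of_mem fun j _ => j.2]

lemma mem_X {b : ℕ × ℕ} :
    b ∈ Xtargets a ↔ ∃ (i : Fin (3 * m)) (j : ℕ), j < a i ∧ b = (0, sIdx a i + j) := by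
  unfold Xtargets
  simp only [Finset.mem_biUnion, Finset.mem_univ, true_and, Finset.mem_image,
    Finset.mem_range, startX_eq]
  constructor
  · rintro ⟨i, j, hj, heq⟩
    exact ⟨i, j, hj, heq.symm⟩
  · rintro ⟨i, j, hj, heq⟩
    exact ⟨i, j, hj, heq.symm⟩

lemma mem_Y {b : ℕ × ℕ} :
    b ∈ Ytargets m T a ↔ ∃ k, k < m ∧ b = (0, sumX a + T + k * (T + 1)) := by
  unfold Ytargets
  simp only [Finset.mem_image, Finset.mem_range]
  constructor
  · rintro ⟨k, hk, heq⟩; exact ⟨k, hk, heq.symm⟩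
  · rintro ⟨k, hk, heq⟩; exact ⟨k, hk, heq.symm⟩

lemma mem_Z {b : ℕ × ℕ} :
    b ∈ Ztargets m T a ↔ ∃ k, k < m ∧ b = (2, sumX a + k) := by
  unfold Ztargets
  simp only [Finset.mem_image, Finset.mem_range]
  constructor
  · rintro ⟨k, hk, heq⟩; exact ⟨k, hk, heq.symm⟩
  · rintro ⟨k, hk, heq⟩; exact ⟨k, hk, heq.symm⟩

lemma X_height_lt {h : ℕ} (hX : (0, h) ∈ Xtargets a) : h + 2 ≤ sumX a := by
  rw [mem_X] at hX
  obtain ⟨i, j, hj, heq⟩ := hX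
  have h1 : h = sIdx a ↑i + j := congrArg Prod.snd heq
  have h2 : sIdx a (↑i + 1) = sIdx a ↑i + (a i + 1) := sIdx_succ a ↑i i.2
  have h3 := sIdx_mono a (show (↑i + 1 : ℕ) ≤ 3 * m from i.2)
  rw [sIdx_total] at h3
  omega

lemma not_in_X_at_gap (i : ℕ) (hi : i < 3 * m) :
    (0, sIdx a i + a ⟨i, hi⟩) ∉ Xtargets a := by
  rw [mem_X]
  rintro ⟨i', j, hj, heq⟩
  have hh : sIdx a i + a ⟨i, hi⟩ = sIdx a ↑i' + j := congrArg Prod.snd heq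
  have hsucc : sIdx a (i + 1) = sIdx a i + (a ⟨i, hi⟩ + 1) := sIdx_succ a i hi
  have hsucc' : sIdx a (↑i' + 1) = sIdx a ↑i' + (a i' + 1) := sIdx_succ a ↑i' i'.2
  rcases lt_trichotomy i (i' : ℕ) with hlt | heqi | hgt
  · have := sIdx_mono a (show i + 1 ≤ (i' : ℕ) from hlt)
    omega
  · have hii : i' = ⟨i, hi⟩ := Fin.ext heqi.symm
    rw [hii] at hh hj
    simp only [Fin.val_mk] at hh
    omega
  · have := sIdx_mono a (show (i' : ℕ) + 1 ≤ i from hgt)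
    omega

/-- The height of the `k`-th segment representative in stack `0`. -/
def repH (m T : ℕ) (a : Fin (3 * m) → ℕ) (k : ℕ) : ℕ :=
  if k < 3 * m then sIdx a k else sumX a + T + (k - 3 * m) * (T + 1)

lemma rep_mem (hpos : ∀ i, 0 < a i) (k : ℕ) (hk : k < 4 * m) :
    (0, repH m T a k) ∈ Xtargets a ∪ Ytargets m T a ∪ Ztargets m T a := by
  by_cases h3 : k < 3 * m
  · apply Finset.mem_union_left
    apply Finset.mem_union_left
    rw [mem_X]
    exact ⟨⟨k, h3⟩, 0, hpos _, by simp [repH, h3]⟩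
  · apply Finset.mem_union_left
    apply Finset.mem_union_right
    rw [mem_Y]
    exact ⟨k - 3 * m, by omega, by simp [repH, h3]⟩

lemma gap_adj (hpos : ∀ i, 0 < a i) (hT : 1 ≤ T) (k : ℕ) (hk : k + 1 < 4 * m) :
    ∃ g, repH m T a k < g ∧ g < repH m T a (k + 1) ∧
      (0, g) ∉ Xtargets a ∪ Ytargets m T a ∪ Ztargets m T a := by
  have hXlt : ∀ h, (0, h) ∈ Xtargets a → h + 2 ≤ sumX a := fun h hh => X_height_lt a hh
  by_cases hA : k + 1 < 3 * m
  · have hk3 : k < 3 * m := by omega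
    refine ⟨sIdx a k + a ⟨k, hk3⟩, ?_, ?_, ?_⟩
    · rw [repH, if_pos hk3]
      have := hpos ⟨k, hk3⟩; omega
    · rw [repH, if_pos hA, sIdx_succ a k hk3]
      omega
    · intro hmem
      rcases Finset.mem_union.mp hmem with hmem' | hZ
      · rcases Finset.mem_union.mp hmem' with hX | hY
        · exact not_in_X_at_gap a k hk3 hX
        · rw [mem_Y] at hY
          obtain ⟨k', _, heq⟩ := hY
          have hh := congrArg Prod.snd heq
          have hsucc : sIdx a (k + 1) = sIdx a k + (a ⟨k, hk3⟩ + 1) := sIdx_succ a k hk3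
          have h3 := sIdx_mono a (show k + 1 ≤ 3 * m by omega)
          rw [sIdx_total] at h3
          simp only at hh
          omega
      · rw [mem_Z] at hZ
        obtain ⟨k', _, heq⟩ := hZ
        exact absurd (congrArg Prod.fst heq) (by simp)
  · by_cases hB : k + 1 = 3 * m
    · have hk3 : k < 3 * m := by omega
      refine ⟨sumX a, ?_, ?_, ?_⟩
      · have hsucc : sIdx a (k + 1) = sIdx a k + (a ⟨k, hk3⟩ + 1) := sIdx_succ a k hk3
        have h3 := sIdx_mono a (show k + 1 ≤ 3 * m by omega)
        rw [sIdx_total] at h3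
        rw [repH, if_pos hk3]
        have := hpos ⟨k, hk3⟩
        omega
      · rw [repH, if_neg (by omega)]
        have : k + 1 - 3 * m = 0 := by omega
        rw [this]
        omega
      · intro hmem
        rcases Finset.mem_union.mp hmem with hmem' | hZ
        · rcases Finset.mem_union.mp hmem' with hX | hY
          · have := X_height_lt a hX; omega
          · rw [mem_Y] at hY
            obtain ⟨k', _, heq⟩ := hY
            have hh := congrArg Prod.snd heq
            simp only at hh
            omega
        · rw [mem_Z] at hZ
          obtain ⟨k', _, heq⟩ := hZ
          exact absurd (congrArg Prod.fst heq) (by simp)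
    · have hC : 3 * m ≤ k := by omega
      set q := k - 3 * m with hq
      have hk1 : k + 1 - 3 * m = q + 1 := by omega
      refine ⟨sumX a + T + q * (T + 1) + 1, ?_, ?_, ?_⟩
      · rw [repH, if_neg (by omega), ← hq]
        omega
      · rw [repH, if_neg (by omega), hk1]
        have : (q + 1) * (T + 1) = q * (T + 1) + (T + 1) := by ring
        omega
      · intro hmem
        rcases Finset.mem_union.mp hmem with hmem' | hZ
        · rcases Finset.mem_union.mp hmem' with hX | hY
          · have := X_height_lt a hX; omega
          · rw [mem_Y] at hY
            obtain ⟨k', _, heq⟩ := hY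
            have hh := congrArg Prod.snd heq
            simp only at hh
            rcases Nat.lt_or_ge k' (q + 1) with hlt | hge
            · have : k' * (T + 1) ≤ q * (T + 1) :=
                Nat.mul_le_mul_right _ (by omega)
              omega
            · have h1 : (q + 1) * (T + 1) ≤ k' * (T + 1) :=
                Nat.mul_le_mul_right _ hge
              have h2 : (q + 1) * (T + 1) = q * (T + 1) + (T + 1) := by ring
              omega
        · rw [mem_Z] at hZ
          obtain ⟨k', _, heq⟩ := hZ
          exact absurd (congrArg Prod.fst heq) (by simp)

lemma repH_lt (hpos : ∀ i, 0 < a i) (hT : 1 ≤ T) {k k' : ℕ} (h : k < k') (hk' : k' < 4 * m) :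
    repH m T a k < repH m T a k' := by
  induction k' with
  | zero => omega
  | succ n ih =>
    rcases Nat.lt_succ_iff_lt_or_eq.mp h with h' | h'
    · have h1 := ih h' (by omega)
      obtain ⟨g, hg1, hg2, _⟩ := gap_adj a hpos hT n (by omega)
      omega
    · subst h'
      obtain ⟨g, hg1, hg2, _⟩ := gap_adj a hpos hT k hk'
      omega

lemma exists_gap (hpos : ∀ i, 0 < a i) (hT : 1 ≤ T) {k k' : ℕ} (hkk : k < k')
    (hk4 : k' < 4 * m) :
    ∃ g, repH m T a k < g ∧ g < repH m T a k' ∧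
      (0, g) ∉ Xtargets a ∪ Ytargets m T a ∪ Ztargets m T a := by
  obtain ⟨g, h1, h2, h3⟩ := gap_adj a hpos hT k (by omega)
  refine ⟨g, h1, ?_, h3⟩
  rcases Nat.eq_or_lt_of_le (show k + 1 ≤ k' from hkk) with heq | hlt
  · rwa [← heq]
  · exact h2.trans (repH_lt a hpos hT hlt hk4)

lemma target_stack {b : ℕ × ℕ} (hb : b ∈ Xtargets a ∪ Ytargets m T a ∪ Ztargets m T a) :
    b.1 = 0 ∨ b.1 = 2 := by
  rcases Finset.mem_union.mp hb with hb' | hZ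
  · rcases Finset.mem_union.mp hb' with hX | hY
    · rw [mem_X] at hX
      obtain ⟨_, _, _, rfl⟩ := hX
      exact Or.inl rfl
    · rw [mem_Y] at hY
      obtain ⟨_, _, rfl⟩ := hY
      exact Or.inl rfl
  · rw [mem_Z] at hZ
    obtain ⟨_, _, rfl⟩ := hZ
    exact Or.inr rfl

/-- The key blocking lemma: no cycle can retrieve stack-`0` targets on both
sides of a persistent non-target gap. -/
lemma gap_blocks {At D : Finset (ℕ × ℕ)} {cfg : Config} {c : Cycle}
    (ht : TrackedR At D cfg) (hv : ValidCycle cfg c)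
    {u v g : ℕ} (hu : (0, u) ∉ D) (hvD : (0, v) ∉ D)
    (hg : (0, g) ∉ At) (huv : u < g) (hgv : g < v)
    (hsequ : fall D (0, u) ∈ c.seq) (hseqv : fall D (0, v) ∈ c.seq) : False := by
  have hgD : (0, g) ∉ D := fun h => hg (ht.1 h)
  have h1 : (fall D (0, u)).2 < (fall D (0, g)).2 := fall_snd_lt hu rfl huv
  have h2 : (fall D (0, g)).2 < (fall D (0, v)).2 := fall_snd_lt hgD rfl hgv
  have hmem := stack0_contig hv hsequ hseqv rfl rfl h1 h2
  have hrem := mem_rem_of_mem_seq hv _ hmem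
  rw [ht.2] at hrem
  obtain ⟨w, hw, hweq⟩ := Finset.mem_image.mp hrem
  rw [Finset.mem_sdiff] at hw
  have hwg : fall D w = fall D (0, g) := hweq
  have := fall_inj hw.2 hgD hwg
  exact hg (this ▸ hw.1)

end AuxRed

lemma mem_stepE {A D : Finset (ℕ × ℕ)} {c : Cycle} {b : ℕ × ℕ} :
    b ∈ stepE A D c ↔ (b ∈ A ∧ b ∉ D) ∧ fall D b ∈ c.seq := by
  unfold stepE
  rw [Finset.mem_filter, Finset.mem_sdiff]

/-- In the SACRP instance `I_R` constructed from a
3-Partition instance, every feasible solution uses at least `4*m` cycles to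
retrieve the targets of the sets `X` and `Y` in the first stack (in the
first stack the targets appear as `4*m` pairwise disjoint vertical
segments, each separated from the next by at least one non-target, and by
height-continuity of batches no single cycle can retrieve targets from two
distinct segments), and at least `m` cycles to retrieve the targets of `Z`
in the third stack (stack `2` contains no targets, so by prefix-closure at
most one element of `Z` is retrieved per cycle). -/
theorem cycle_lower_bounds (m T : ℕ) (hm : 0 < m) (a : Fin (3 * m) → ℕ)
    (hpos : ∀ i, 0 < a i) (heven : ∀ i, Even (a i))
    (hbounds : ∀ i, T < 4 * a i ∧ 2 * a i < T)
    (hsum : ∑ i, a i = m * T) :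
    ∀ sol : List Cycle, (reduction m T a).Feasible sol →
      4 * m ≤ (sol.countP fun c => c.seq.any fun b => b.1 == 0) ∧
      m ≤ (sol.countP fun c => c.seq.any fun b => b.1 == 2) := by
  intro sol hfeas
  classical
  obtain ⟨hvalid, hempty⟩ := hfeas
  set At : Finset (ℕ × ℕ) := Xtargets a ∪ Ytargets m T a ∪ Ztargets m T a with hAt
  have hT : 1 ≤ T := by
    have h := (hbounds ⟨0, by omega⟩).2
    have h2 := hpos ⟨0, by omega⟩
    omega
  have h0 : TrackedR At ∅ (reduction m T a).init := by
    refine ⟨Finset.empty_subset _, ?_⟩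
    show (reduction m T a).targets = (At \ ∅).image (fall ∅)
    rw [Finset.sdiff_empty,
      show fall (∅ : Finset (ℕ × ℕ)) = id from funext fall_empty, Finset.image_id]
    rfl
  have hTrackedFin := trackedR_run sol _ ∅ h0 hvalid
  have hAll : ∀ b ∈ At, b ∈ DAfter At ∅ sol := by
    intro b hb
    by_contra hnb
    have hmem : fall (DAfter At ∅ sol) b ∈ (runCycles (reduction m T a).init sol).rem := by
      rw [hTrackedFin.2]
      exact Finset.mem_image_of_mem _ (Finset.mem_sdiff.mpr ⟨hb, hnb⟩)
    rw [hempty] at hmem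
    exact absurd hmem (Finset.notMem_empty _)
  have key2 : ∀ b : ℕ × ℕ, ∃ i, b ∈ At → ∃ hi : i < sol.length,
      b ∉ DAfter At ∅ (sol.take i) ∧
      b ∈ stepE At (DAfter At ∅ (sol.take i)) (sol.get ⟨i, hi⟩) := by
    intro b
    by_cases hb : b ∈ At
    · obtain ⟨i, hi, h1, h2⟩ :=
        mem_DAfter_index sol ∅ b (hAll b hb) (Finset.notMem_empty b)
      exact ⟨i, fun _ => ⟨hi, h1, h2⟩⟩
    · exact ⟨0, fun h => absurd h hb⟩
  choose idx hidx using key2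
  have hTrack_i : ∀ i, TrackedR At (DAfter At ∅ (sol.take i))
      (runCycles (reduction m T a).init (sol.take i)) := by
    intro i
    exact trackedR_run (sol.take i) _ ∅ h0
      ((validFrom_append (sol.take i) (sol.drop i) _
        (by rw [List.take_append_drop]; exact hvalid)).1)
  constructor
  · -- at least 4*m cycles touch stack 0
    have hres := countP_ge_of_inj sol (fun c => c.seq.any fun b => b.1 == 0)
        (Finset.range (4 * m)) (fun k => idx (0, repH m T a k)) ?_ ?_
    · simpa using hres
    · intro k hk
      rw [Finset.mem_range] at hk
      have hbmem : (0, repH m T a k) ∈ At := rep_mem a hpos k hk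
      obtain ⟨hi, h1, h2⟩ := hidx _ hbmem
      rw [mem_stepE] at h2
      refine ⟨hi, ?_⟩
      rw [List.any_eq_true]
      exact ⟨fall _ (0, repH m T a k), h2.2, rfl⟩
    · have main : ∀ u u' : ℕ, u < u' → u' < 4 * m →
          idx (0, repH m T a u) = idx (0, repH m T a u') → False := by
        intro u u' huu hu4 hid
        have hbu : (0, repH m T a u) ∈ At := rep_mem a hpos u (by omega)
        have hbu' : (0, repH m T a u') ∈ At := rep_mem a hpos u' hu4
        obtain ⟨hi, h1, h2⟩ := hidx _ hbu
        obtain ⟨hi', h1', h2'⟩ := hidx _ hbu'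
        rw [mem_stepE] at h2 h2'
        rw [← hid] at h1'
        have t := h2'.2
        rw [show (⟨idx (0, repH m T a u'), hi'⟩ : Fin sol.length)
            = ⟨idx (0, repH m T a u), hi⟩ from Fin.ext hid.symm] at t
        rw [← hid] at t
        obtain ⟨g, hg1, hg2, hg3⟩ := exists_gap a hpos hT huu hu4
        exact gap_blocks (hTrack_i (idx (0, repH m T a u)))
          (valid_at_index hvalid (idx (0, repH m T a u)) hi)
          h1 h1' (by rw [← hAt] at hg3; exact hg3) hg1 hg2 h2.2 t
      intro k hk k' hk' hFeq
      rw [Finset.mem_range] at hk hk'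
      rcases Nat.lt_trichotomy k k' with h | h | h
      · exact absurd hFeq (fun hc => main k k' h hk' hc)
      · exact h
      · exact absurd hFeq (fun hc => main k' k h hk (hc.symm))
  · -- at least m cycles touch stack 2
    have hres := countP_ge_of_inj sol (fun c => c.seq.any fun b => b.1 == 2)
        (Finset.range m) (fun k => idx (2, sumX a + k)) ?_ ?_
    · simpa using hres
    · intro k hk
      rw [Finset.mem_range] at hk
      have hbmem : (2, sumX a + k) ∈ At :=
        Finset.mem_union_right _ ((mem_Z a).mpr ⟨k, hk, rfl⟩)
      obtain ⟨hi, h1, h2⟩ := hidx _ hbmem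
      rw [mem_stepE] at h2
      refine ⟨hi, ?_⟩
      rw [List.any_eq_true]
      exact ⟨fall _ (2, sumX a + k), h2.2, rfl⟩
    · have main : ∀ u u' : ℕ, u < m → u' < m →
          idx (2, sumX a + u) = idx (2, sumX a + u') → u = u' := by
        intro u u' hu hu' hid
        have hbu : (2, sumX a + u) ∈ At :=
          Finset.mem_union_right _ ((mem_Z a).mpr ⟨u, hu, rfl⟩)
        have hbu' : (2, sumX a + u') ∈ At :=
          Finset.mem_union_right _ ((mem_Z a).mpr ⟨u', hu', rfl⟩)
        obtain ⟨hi, h1, h2⟩ := hidx _ hbu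
        obtain ⟨hi', h1', h2'⟩ := hidx _ hbu'
        rw [mem_stepE] at h2 h2'
        rw [← hid] at h1'
        have t := h2'.2
        rw [show (⟨idx (2, sumX a + u'), hi'⟩ : Fin sol.length)
            = ⟨idx (2, sumX a + u), hi⟩ from Fin.ext hid.symm] at t
        rw [← hid] at t
        set i := idx (2, sumX a + u) with hidef
        have htr := hTrack_i i
        have hno1 : ∀ x ∈ (runCycles (reduction m T a).init (sol.take i)).rem, x.1 ≠ 1 := by
          intro x hx
          rw [htr.2] at hx
          obtain ⟨w, hw, rfl⟩ := Finset.mem_image.mp hx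
          rw [Finset.mem_sdiff] at hw
          have := target_stack a (by rw [hAt] at hw; exact hw.1)
          rw [fall_fst]
          omega
        have heqf := stack2_unique (valid_at_index hvalid i hi) hno1 h2.2 t rfl rfl
        have := fall_inj h1 h1' heqf
        have h2 := congrArg Prod.snd this
        simp only at h2
        omega
      intro k hk k' hk' hFeq
      rw [Finset.mem_range] at hk hk'
      exact main k k' hk hk' hFeq


end SACRP
end
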